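/- arXiv:2510.01590 — 2 statements merged into one kernel-verified Lean document; each statement's English description precedes it below -/
import Mathlib

section
/- Let x be a solution of the multi-patch chikungunya model with nonnegative components and initial history φ ∈ Ω(0). Then for every patch i and every t ≥ 0 one has L_s^i(t) + L_I^i(t) ≤ M^i; in particular the larvae components of the solution are bounded on [0,∞). -/
open MeasureTheory Set

/-!
STATEMENT 1: Let x be a solution of the multi-patch chikungunya model with
nonnegative components and initial history φ ∈ Ω(0).  Then for every patch i
and every t ≥ 0 one has L_s^i(t) + L_I^i(t) ≤ M^i; in particular the larvae
components of the solution are bounded on [0,∞).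
-/

/-- `x` is a solution of the multi-patch chikungunya model with initial history
`φ` on `[-ttil, 0]`.  Component indices in `Fin 10`:
`0 = S_h, 1 = E_h, 2 = I_h, 3 = A_h, 4 = R_h, 5 = L_I, 6 = L_s, 7 = S_m,
8 = E_m, 9 = I_m`. -/
def IsModelSol (n : ℕ)
    (R : Fin n → ℝ) (μh ηh τh a p βmh βhm : ℝ) (m : Fin n → Fin n → ℝ)
    (bm μm μl K : Fin n → ℝ → ℝ) (μb : ℝ → ℝ)
    (τ τl τ' τl' : Fin n → ℝ → ℝ) (ttil : ℝ)
    (φ x : ℝ → Fin n → Fin 10 → ℝ) : Prop :=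
  (∀ s ∈ Set.Icc (-ttil) (0:ℝ), x s = φ s) ∧
  ContinuousOn x (Set.Ici (-ttil)) ∧
  ∀ t > (0:ℝ), ∀ i : Fin n,
    HasDerivAt (fun s => x s i 0)
      (R i - bm i t * βmh * x t i 0 * x t i 9 - μh * x t i 0
        + ∑ j ∈ Finset.univ.erase i, (m j i * x t j 0 - m i j * x t i 0)) t ∧
    HasDerivAt (fun s => x s i 1)
      (bm i t * βmh * x t i 0 * x t i 9
        - bm i (t - τh) * βmh * x (t - τh) i 0 * x (t - τh) i 9
          * Real.exp (-(μh * τh))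
        - μh * x t i 1
        + ∑ j ∈ Finset.univ.erase i, (m j i * x t j 1 - m i j * x t i 1)) t ∧
    HasDerivAt (fun s => x s i 2)
      ((1 - a) * βmh * bm i (t - τh) * x (t - τh) i 0 * x (t - τh) i 9
          * Real.exp (-(μh * τh))
        - (ηh + μh) * x t i 2) t ∧
    HasDerivAt (fun s => x s i 3)
      (a * βmh * bm i (t - τh) * x (t - τh) i 0 * x (t - τh) i 9
          * Real.exp (-(μh * τh))
        - (ηh + μh) * x t i 3
        + ∑ j ∈ Finset.univ.erase i, (m j i * x t j 3 - m i j * x t i 3)) t ∧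
    HasDerivAt (fun s => x s i 4)
      (ηh * (x t i 2 + x t i 3) - μh * x t i 4
        + ∑ j ∈ Finset.univ.erase i, (m j i * x t j 4 - m i j * x t i 4)) t ∧
    HasDerivAt (fun s => x s i 5)
      (μb t * (1 - (x t i 6 + x t i 5) / K i t) * p * x t i 9
        - μl i t * x t i 5) t ∧
    HasDerivAt (fun s => x s i 6)
      (μb t * (1 - (x t i 6 + x t i 5) / K i t)
          * (x t i 7 + x t i 8 + (1 - p) * x t i 9)
        - μl i t * x t i 6) t ∧
    HasDerivAt (fun s => x s i 7)
      ((1 - τl' i t) * μb (t - τl i t)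
          * (1 - (x (t - τl i t) i 6 + x (t - τl i t) i 5) / K i (t - τl i t))
          * (x (t - τl i t) i 7 + x (t - τl i t) i 8 + (1 - p) * x (t - τl i t) i 9)
          * Real.exp (-(∫ u in (t - τl i t)..t, μl i u))
        - bm i t * βhm * x t i 7 * (x t i 2 + x t i 3)
        - μm i t * x t i 7) t ∧
    HasDerivAt (fun s => x s i 8)
      (bm i t * βhm * x t i 7 * (x t i 2 + x t i 3) - μm i t * x t i 8
        - (1 - τ' i t) * βhm * bm i (t - τ i t)
          * (x (t - τ i t) i 2 + x (t - τ i t) i 3) * x (t - τ i t) i 7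
          * Real.exp (-(∫ u in (t - τ i t)..t, μm i u))) t ∧
    HasDerivAt (fun s => x s i 9)
      ((1 - τl' i t) * μb (t - τl i t)
          * (1 - (x (t - τl i t) i 6 + x (t - τl i t) i 5) / K i (t - τl i t))
          * p * x (t - τl i t) i 9
          * Real.exp (-(∫ u in (t - τl i t)..t, μl i u))
        + (1 - τ' i t) * βhm * bm i (t - τ i t)
          * (x (t - τ i t) i 2 + x (t - τ i t) i 3) * x (t - τ i t) i 7
          * Real.exp (-(∫ u in (t - τ i t)..t, μm i u))
        - μm i t * x t i 9) t

/-- the admissible set `Ω(0)` of initial histories. -/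
def InOmega0 (n : ℕ) (βhm : ℝ)
    (bm : Fin n → ℝ → ℝ) (K : Fin n → ℝ → ℝ) (τ : Fin n → ℝ → ℝ) (ttil : ℝ)
    (φ : ℝ → Fin n → Fin 10 → ℝ) : Prop :=
  ContinuousOn φ (Set.Icc (-ttil) 0) ∧
  (∀ s ∈ Set.Icc (-ttil) (0:ℝ), ∀ (i : Fin n) (c : Fin 10), 0 ≤ φ s i c) ∧
  (∀ i : Fin n, ∀ s ∈ Set.Icc (-ttil) (0:ℝ), φ s i 6 + φ s i 5 ≤ K i s) ∧
  (∀ i : Fin n, φ 0 i 8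
    = ∫ u in (-(τ i 0))..0, bm i u * βhm * φ u i 7 * (φ u i 2 + φ u i 3))

/-!
The total larval population `V = L_s + L_I` of a patch obeys the logistic-type equation
`V' = μ_b (1 - V / K) (S_m + E_m + I_m) - μ_l V`, whose right-hand side is nonpositive as soon as
`V ≥ K`, hence as soon as `V > M ≥ K`. A continuous function that starts below `M` and cannot
increase while it is above `M` stays below `M`.
-/

theorem image_le_of_hasDerivAt_nonpos_above {f f' : ℝ → ℝ} {a b B : ℝ}
    (hf : ContinuousOn f (Icc a b)) (hf' : ∀ x ∈ Ioo a b, HasDerivAt f (f' x) x)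
    (hf'_nonpos : ∀ x ∈ Ioo a b, B < f x → f' x ≤ 0) (ha : f a ≤ B) :
    ∀ x ∈ Icc a b, f x ≤ B := by
  intro t ht
  by_contra! hBt
  set S := Icc a t ∩ f ⁻¹' Iic B
  set s := sSup S
  have hS_closed : IsClosed S :=
    (hf.mono (Icc_subset_Icc_right ht.2)).preimage_isClosed_of_isClosed isClosed_Icc isClosed_Iic
  have hS_bdd : BddAbove S := bddAbove_Icc.mono inter_subset_left
  obtain ⟨⟨has, hst⟩, hfs⟩ : s ∈ S := hS_closed.csSup_mem ⟨a, ⟨le_rfl, ht.1⟩, ha⟩ hS_bdd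
  -- Past the last time `s ≤ t` at which `f ≤ B`, the function stays above `B`.
  have h_above : ∀ u ∈ Ioo s t, B < f u := fun u hu => by
    by_contra! hu_le
    exact hu.1.not_ge (le_csSup hS_bdd ⟨⟨has.trans hu.1.le, hu.2.le⟩, hu_le⟩)
  have h_anti : AntitoneOn f (Icc s t) := by
    refine antitoneOn_of_hasDerivWithinAt_nonpos (f' := f') (convex_Icc s t)
      (hf.mono (Icc_subset_Icc has ht.2)) (fun u hu => ?_) (fun u hu => ?_) <;>
      rw [interior_Icc] at hu
    · exact (hf' u ⟨has.trans_lt hu.1, hu.2.trans_le ht.2⟩).hasDerivWithinAt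
    · exact hf'_nonpos u ⟨has.trans_lt hu.1, hu.2.trans_le ht.2⟩ (h_above u hu)
  exact hBt.not_ge ((h_anti ⟨le_rfl, hst⟩ ⟨hst, le_rfl⟩ hst).trans hfs)

theorem logistic_rate_nonpos_of_capacity_le {r c N ν V : ℝ} (hr : 0 ≤ r) (hc : 0 < c)
    (hcV : c ≤ V) (hN : 0 ≤ N) (hν : 0 ≤ ν) : r * (1 - V / c) * N - ν * V ≤ 0 := by
  have h_factor : 1 - V / c ≤ 0 := by
    rw [sub_nonpos, one_le_div hc]
    exact hcV
  have h_growth : r * (1 - V / c) * N ≤ 0 :=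
    mul_nonpos_of_nonpos_of_nonneg (mul_nonpos_of_nonneg_of_nonpos hr h_factor) hN
  linarith [mul_nonneg hν (hc.le.trans hcV)]

namespace IsModelSol

variable {n : ℕ} {R : Fin n → ℝ} {μh ηh τh a p βmh βhm : ℝ} {m : Fin n → Fin n → ℝ}
  {bm μm μl K : Fin n → ℝ → ℝ} {μb : ℝ → ℝ} {τ τl τ' τl' : Fin n → ℝ → ℝ} {ttil : ℝ}
  {φ x : ℝ → Fin n → Fin 10 → ℝ}

theorem continuousOn_larvae
    (hx : IsModelSol n R μh ηh τh a p βmh βhm m bm μm μl K μb τ τl τ' τl' ttil φ x)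
    (i : Fin n) : ContinuousOn (fun s => x s i 6 + x s i 5) (Ici (-ttil)) := by
  have hcoord : ∀ c : Fin 10, ContinuousOn (fun s => x s i c) (Ici (-ttil)) := fun c => by
    exact ((continuous_apply c).comp (continuous_apply i)).comp_continuousOn hx.2.1
  exact (hcoord 6).add (hcoord 5)

theorem hasDerivAt_larvae
    (hx : IsModelSol n R μh ηh τh a p βmh βhm m bm μm μl K μb τ τl τ' τl' ttil φ x)
    {t : ℝ} (ht : 0 < t) (i : Fin n) :
    HasDerivAt (fun s => x s i 6 + x s i 5)
      (μb t * (1 - (x t i 6 + x t i 5) / K i t) * (x t i 7 + x t i 8 + x t i 9)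
        - μl i t * (x t i 6 + x t i 5)) t := by
  obtain ⟨-, -, -, -, -, hLI, hLs, -⟩ := hx.2.2 t ht i
  exact (hLs.add hLI).congr_deriv (by ring)

theorem larvae_at_zero_le_capacity
    (hx : IsModelSol n R μh ηh τh a p βmh βhm m bm μm μl K μb τ τl τ' τl' ttil φ x)
    (hφ : InOmega0 n βhm bm K τ ttil φ) (httil : 0 ≤ ttil) (i : Fin n) :
    x 0 i 6 + x 0 i 5 ≤ K i 0 := by
  have h0 : (0 : ℝ) ∈ Icc (-ttil) 0 := ⟨neg_nonpos.mpr httil, le_rfl⟩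
  rw [hx.1 0 h0]
  exact hφ.2.2.1 i 0 h0

end IsModelSol

theorem larvae_bounded_general
    (n : ℕ) (hn : 0 < n) (w : ℝ)
    (R : Fin n → ℝ)
    (μh ηh τh a p βmh βhm : ℝ)
    (hτh : 0 < τh)
    (m : Fin n → Fin n → ℝ)
    (bm μm μl K : Fin n → ℝ → ℝ) (μb : ℝ → ℝ)
    (hμl : ∀ i, Continuous (μl i) ∧ (∀ t, 0 < μl i t) ∧ Function.Periodic (μl i) w)
    (hK : ∀ i, Continuous (K i) ∧ (∀ t, 0 < K i t) ∧ Function.Periodic (K i) w)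
    (hμb : Continuous μb ∧ (∀ t, 0 < μb t) ∧ Function.Periodic μb w)
    (τ τl τ' τl' : Fin n → ℝ → ℝ)
    (ttil : ℝ)
    (httil : ttil = ⨆ i : Fin n,
      max (max (sSup (τ i '' Set.Icc 0 w)) (sSup (τl i '' Set.Icc 0 w))) τh)
    (M : Fin n → ℝ) (hM : ∀ i t, K i t ≤ M i)
    (φ : ℝ → Fin n → Fin 10 → ℝ)
    (hφ : InOmega0 n βhm bm K τ ttil φ)
    (x : ℝ → Fin n → Fin 10 → ℝ)
    (hx : IsModelSol n R μh ηh τh a p βmh βhm m bm μm μl K μb τ τl τ' τl' ttil φ x)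
    (hxnn : ∀ t ≥ -ttil, ∀ (i : Fin n) (c : Fin 10), 0 ≤ x t i c) :
    ∀ (i : Fin n), ∀ t ≥ (0:ℝ), x t i 6 + x t i 5 ≤ M i := by
  intro i T hT
  have httil_nonneg : 0 ≤ ttil := httil ▸
    le_ciSup_of_le (Set.finite_range _).bddAbove ⟨0, hn⟩ (hτh.le.trans (le_max_right _ _))
  have hx_nonneg : ∀ s ≥ (0 : ℝ), ∀ c, 0 ≤ x s i c := fun s hs =>
    hxnn s (by linarith) i
  refine image_le_of_hasDerivAt_nonpos_above
    ((hx.continuousOn_larvae i).mono fun s hs => (neg_nonpos.mpr httil_nonneg).trans hs.1)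
    (fun s hs => hx.hasDerivAt_larvae hs.1 i) (fun s hs hMs => ?_)
    ((hx.larvae_at_zero_le_capacity hφ httil_nonneg i).trans (hM i 0)) T ⟨hT, le_rfl⟩
  have hs0 := hs.1.le
  exact logistic_rate_nonpos_of_capacity_le (hμb.2.1 s).le ((hK i).2.1 s)
    ((hM i s).trans hMs.le)
    (add_nonneg (add_nonneg (hx_nonneg s hs0 7) (hx_nonneg s hs0 8)) (hx_nonneg s hs0 9))
    ((hμl i).2.1 s).le

theorem larvae_bounded
    (n : ℕ) (hn : 0 < n) (w : ℝ) (hw : 0 < w)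
    (R : Fin n → ℝ) (hR : ∀ i, 0 ≤ R i)
    (μh ηh τh a p βmh βhm : ℝ)
    (hμh : 0 < μh) (hηh : 0 ≤ ηh) (hτh : 0 < τh)
    (ha : a ∈ Set.Icc (0:ℝ) 1) (hp : p ∈ Set.Icc (0:ℝ) 1)
    (hβmh : 0 ≤ βmh) (hβhm : 0 ≤ βhm)
    (m : Fin n → Fin n → ℝ) (hm : ∀ i j, i ≠ j → 0 ≤ m i j)
    (bm μm μl K : Fin n → ℝ → ℝ) (μb : ℝ → ℝ)
    (hbm : ∀ i, Continuous (bm i) ∧ (∀ t, 0 < bm i t) ∧ Function.Periodic (bm i) w)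
    (hμm : ∀ i, Continuous (μm i) ∧ (∀ t, 0 < μm i t) ∧ Function.Periodic (μm i) w)
    (hμl : ∀ i, Continuous (μl i) ∧ (∀ t, 0 < μl i t) ∧ Function.Periodic (μl i) w)
    (hK : ∀ i, Continuous (K i) ∧ (∀ t, 0 < K i t) ∧ Function.Periodic (K i) w)
    (hμb : Continuous μb ∧ (∀ t, 0 < μb t) ∧ Function.Periodic μb w)
    (τ τl τ' τl' : Fin n → ℝ → ℝ)
    (hτ : ∀ i, (∀ t, HasDerivAt (τ i) (τ' i t) t) ∧ Continuous (τ' i) ∧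
      (∀ t, 0 < τ i t) ∧ Function.Periodic (τ i) w ∧ (∀ t, τ' i t < 1))
    (hτl : ∀ i, (∀ t, HasDerivAt (τl i) (τl' i t) t) ∧ Continuous (τl' i) ∧
      (∀ t, 0 < τl i t) ∧ Function.Periodic (τl i) w ∧ (∀ t, τl' i t < 1))
    (ttil : ℝ)
    (httil : ttil = ⨆ i : Fin n,
      max (max (sSup (τ i '' Set.Icc 0 w)) (sSup (τl i '' Set.Icc 0 w))) τh)
    (M : Fin n → ℝ) (hM : ∀ i t, K i t ≤ M i)
    (φ : ℝ → Fin n → Fin 10 → ℝ)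
    (hφ : InOmega0 n βhm bm K τ ttil φ)
    (x : ℝ → Fin n → Fin 10 → ℝ)
    (hx : IsModelSol n R μh ηh τh a p βmh βhm m bm μm μl K μb τ τl τ' τl' ttil φ x)
    (hxnn : ∀ t ≥ -ttil, ∀ (i : Fin n) (c : Fin 10), 0 ≤ x t i c) :
    ∀ (i : Fin n), ∀ t ≥ (0:ℝ), x t i 6 + x t i 5 ≤ M i :=
  larvae_bounded_general n hn w R μh ηh τh a p βmh βhm hτh m bm μm μl K μb hμl hK hμb τ τl τ' τl'
    ttil httil M hM φ hφ x hx hxnn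
end

section
/- The linear system (μ_h + Σ_{j≠i} m_ij) S_i − Σ_{j≠i} m_ji S_j = R^i, i = 1,…,n, has a unique solution (S̄_1,…,S̄_n) ∈ ℝ^n, and this solution is componentwise nonnegative. Equivalently, the disease-free human subsystem (S_h^i)' = R^i − μ_h S_h^i + Σ_{j≠i}(m_ji S_h^j − m_ij S_h^i) has a unique equilibrium, whose components S̄_h^i = (R^i + Σ_{j≠i} m_ji S̄_h^j)/(μ_h + Σ_{j≠i} m_ij) are nonnegative. -/
/-!
Writing the left-hand side as `μ S_i + ∑_j (m_ij S_i - m_ji S_j)`, the migration terms are a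
flux that cancels on summation over any set `N` of patches, apart from the flux across the
boundary of `N`. For `N` the set of patches where `S` is negative, that boundary flux is
nonpositive, so `∑_{i ∈ N} R^i ≤ μ ∑_{i ∈ N} S_i < 0` unless `N` is empty. Hence the operator is
inverse-positive; applied to `±S` this gives injectivity, and in finite dimension bijectivity.
-/

open Finset

namespace DiseaseFree

variable {ι : Type*} [Fintype ι] [DecidableEq ι]

def migrationOperator (μ : ℝ) (m : ι → ι → ℝ) : (ι → ℝ) →ₗ[ℝ] (ι → ℝ) where
  toFun S i := (μ + ∑ j ∈ univ.erase i, m i j) * S i - ∑ j ∈ univ.erase i, m j i * S j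
  map_add' x y := by
    funext i
    simp only [Pi.add_apply, mul_add, sum_add_distrib]
    ring
  map_smul' c x := by
    funext i
    simp only [Pi.smul_apply, smul_eq_mul, RingHom.id_apply, mul_left_comm _ c, ← mul_sum]
    ring

variable {μ : ℝ} {m : ι → ι → ℝ}

theorem migrationOperator_apply (S : ι → ℝ) (i : ι) :
    migrationOperator μ m S i =
      (μ + ∑ j ∈ univ.erase i, m i j) * S i - ∑ j ∈ univ.erase i, m j i * S j :=
  rfl

theorem migrationOperator_apply_eq_add_sum_flux (S : ι → ℝ) (i : ι) :
    migrationOperator μ m S i = μ * S i + ∑ j, (m i j * S i - m j i * S j) := by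
  rw [migrationOperator_apply,
    ← sum_erase univ (f := fun j => m i j * S i - m j i * S j) (sub_self _), sum_sub_distrib,
    ← sum_mul]
  ring

theorem sum_migrationOperator_eq (S : ι → ℝ) (N : Finset ι) :
    ∑ i ∈ N, migrationOperator μ m S i =
      μ * ∑ i ∈ N, S i + ∑ i ∈ N, ∑ j ∈ Nᶜ, (m i j * S i - m j i * S j) := by
  have internal_flux : ∑ i ∈ N, ∑ j ∈ N, (m i j * S i - m j i * S j) = 0 := by
    have antisymm : ∑ i ∈ N, ∑ j ∈ N, (m i j * S i - m j i * S j) =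
        -∑ i ∈ N, ∑ j ∈ N, (m i j * S i - m j i * S j) :=
      calc _ = ∑ j ∈ N, ∑ i ∈ N, (m i j * S i - m j i * S j) := sum_comm
        _ = _ := by simp only [← sum_neg_distrib, neg_sub]
    linarith
  simp only [migrationOperator_apply_eq_add_sum_flux, sum_add_distrib, mul_sum,
    ← sum_add_sum_compl N, internal_flux, zero_add]

theorem nonneg_of_migrationOperator_nonneg (hμ : 0 < μ) (hm : ∀ i j, i ≠ j → 0 ≤ m i j)
    {S : ι → ℝ} (hS : 0 ≤ migrationOperator μ m S) : 0 ≤ S := by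
  intro k
  by_contra! hk
  set N := univ.filter fun i => S i < 0
  have hkN : k ∈ N := by simpa [N] using hk
  have boundary_flux_nonpos : ∑ i ∈ N, ∑ j ∈ Nᶜ, (m i j * S i - m j i * S j) ≤ 0 := by
    refine sum_nonpos fun i hi => sum_nonpos fun j hj => ?_
    simp only [N, mem_compl, mem_filter, mem_univ, true_and, not_lt] at hi hj
    have hij : i ≠ j := fun h => (h ▸ hi).not_ge hj
    nlinarith [hm i j hij, hm j i hij.symm]
  have mass_neg : ∑ i ∈ N, S i < 0 :=
    sum_neg (fun i hi => by simpa [N] using hi) ⟨k, hkN⟩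
  have load_nonneg : 0 ≤ ∑ i ∈ N, migrationOperator μ m S i := sum_nonneg fun i _ => hS i
  rw [sum_migrationOperator_eq] at load_nonneg
  nlinarith

theorem injective_migrationOperator (hμ : 0 < μ) (hm : ∀ i j, i ≠ j → 0 ≤ m i j) :
    Function.Injective (migrationOperator μ m) := by
  rw [← LinearMap.ker_eq_bot, LinearMap.ker_eq_bot']
  intro S hS
  have hS' : migrationOperator μ m (-S) = 0 := by rw [map_neg, hS, neg_zero]
  exact le_antisymm (neg_nonneg.mp (nonneg_of_migrationOperator_nonneg hμ hm hS'.ge))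
    (nonneg_of_migrationOperator_nonneg hμ hm hS.ge)

theorem bijective_migrationOperator (hμ : 0 < μ) (hm : ∀ i j, i ≠ j → 0 ≤ m i j) :
    Function.Bijective (migrationOperator μ m) :=
  let hinj := injective_migrationOperator hμ hm
  ⟨hinj, LinearMap.injective_iff_surjective.mp hinj⟩

end DiseaseFree

open DiseaseFree in
theorem disease_free_human_equilibrium_exists_unique_nonneg_general
    (n : ℕ)
    (μh : ℝ) (hμh : 0 < μh)
    (R : Fin n → ℝ) (hR : ∀ i, 0 ≤ R i)
    (m : Fin n → Fin n → ℝ) (hm : ∀ i j, i ≠ j → 0 ≤ m i j) :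
    ∃ S : Fin n → ℝ,
      (∀ i, (μh + ∑ j ∈ Finset.univ.erase i, m i j) * S i
              - ∑ j ∈ Finset.univ.erase i, m j i * S j = R i) ∧
      (∀ i, 0 ≤ S i) ∧
      (∀ S' : Fin n → ℝ,
        (∀ i, (μh + ∑ j ∈ Finset.univ.erase i, m i j) * S' i
                - ∑ j ∈ Finset.univ.erase i, m j i * S' j = R i) → S' = S) := by
  obtain ⟨hinj, hsurj⟩ := bijective_migrationOperator hμh hm
  obtain ⟨S, hS⟩ := hsurj R
  refine ⟨S, congrFun hS, nonneg_of_migrationOperator_nonneg hμh hm (hS ▸ hR), ?_⟩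
  intro S' hS'
  exact hinj ((funext hS').trans hS.symm)

theorem disease_free_human_equilibrium_exists_unique_nonneg
    (n : ℕ) (hn : 0 < n)
    (μh : ℝ) (hμh : 0 < μh)
    (R : Fin n → ℝ) (hR : ∀ i, 0 ≤ R i)
    (m : Fin n → Fin n → ℝ) (hm : ∀ i j, i ≠ j → 0 ≤ m i j) :
    ∃ S : Fin n → ℝ,
      (∀ i, (μh + ∑ j ∈ Finset.univ.erase i, m i j) * S i
              - ∑ j ∈ Finset.univ.erase i, m j i * S j = R i) ∧
      (∀ i, 0 ≤ S i) ∧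
      (∀ S' : Fin n → ℝ,
        (∀ i, (μh + ∑ j ∈ Finset.univ.erase i, m i j) * S' i
                - ∑ j ∈ Finset.univ.erase i, m j i * S' j = R i) → S' = S) :=
  disease_free_human_equilibrium_exists_unique_nonneg_general n μh hμh R hR m hm
end
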